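/- For every Mockingbird term t, the map fr restricts to an order isomorphism from the poset {s : t ≼ s} (ordered by ≼) onto the poset D*(fr(t)) (ordered by ≪). -/

import Mathlib

/-- Mockingbird terms: the constant `M`, variables `x i`, and applications. -/
inductive MTerm : Type
  | M : MTerm
  | var : ℕ → MTerm
  | app : MTerm → MTerm → MTerm
  deriving DecidableEq

/-- The one-step rewrite relation `⇒` on Mockingbird terms. -/
inductive Step : MTerm → MTerm → Prop
  | mock (t : MTerm) : Step (MTerm.app MTerm.M t) (MTerm.app t t)
  | left {t1 t1' : MTerm} (t2 : MTerm) :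
      Step t1 t1' → Step (MTerm.app t1 t2) (MTerm.app t1' t2)
  | right (t1 : MTerm) {t2 t2' : MTerm} :
      Step t2 t2' → Step (MTerm.app t1 t2) (MTerm.app t1 t2')

/-- `≼`, the reflexive-transitive closure of `⇒`. -/
def MLe : MTerm → MTerm → Prop := Relation.ReflTransGen Step

/-- `≡`, the reflexive-symmetric-transitive closure of `⇒`. -/
def MEquiv : MTerm → MTerm → Prop := Relation.EqvGen Step

/-- Strict version of `≼`. -/
def MLt (s t : MTerm) : Prop := MLe s t ∧ s ≠ t

/-- Covering relation for `≼`. -/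
def MCovBy (s t : MTerm) : Prop := MLt s t ∧ ∀ z, MLt s z → ¬ MLt z t

/-- Duplicative trees: white or black nodes with a list (forest) of children. -/
inductive DTree : Type
  | W : List DTree → DTree
  | B : List DTree → DTree

/-- The one-step relation `⋖` on duplicative forests. -/
inductive DStep : List DTree → List DTree → Prop
  | dup (g : List DTree) : DStep [DTree.W g] [DTree.B (g ++ g)]
  | white {g g' : List DTree} : DStep g g' → DStep [DTree.W g] [DTree.W g']
  | black {g g' : List DTree} : DStep g g' → DStep [DTree.B g] [DTree.B g']
  | head {t t' : DTree} (f : List DTree) : DStep [t] [t'] → DStep (t :: f) (t' :: f)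
  | tail (t : DTree) {f f' : List DTree} : DStep f f' → DStep (t :: f) (t :: f')

/-- `≪`, the reflexive-transitive closure of `⋖`. -/
def DLe : List DTree → List DTree → Prop := Relation.ReflTransGen DStep

/-- The map `fr` from Mockingbird terms to duplicative forests. -/
def fr : MTerm → List DTree
  | MTerm.M => []
  | MTerm.var _ => []
  | MTerm.app MTerm.M MTerm.M => [DTree.B []]
  | MTerm.app MTerm.M t' => [DTree.W (fr t')]
  | MTerm.app t t' => [DTree.B (fr t ++ fr t')]

mutual
  /-- The pruning map on duplicative trees (returns a forest). -/
  def prT : DTree → List DTree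
    | DTree.W g => [DTree.W (prF g)]
    | DTree.B g => prF g
  /-- The pruning map on duplicative forests. -/
  def prF : List DTree → List DTree
    | [] => []
    | t :: f => prT t ++ prF f
end

mutual
  /-- The statistic `mtStat` on duplicative trees. -/
  def mtStat : DTree → ℕ
    | DTree.W g => 2 * ml g
    | DTree.B g => ml g
  /-- Sum of `mtStat` over the trees of a forest. -/
  def mtsum : List DTree → ℕ
    | [] => 0
    | t :: f => mtStat t + mtsum f
  /-- The statistic `ml` on duplicative forests: `1 - ℓ + Σ mtStat`. -/
  def ml : List DTree → ℕ
    | f => mtsum f + 1 - f.length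
end

mutual
  /-- Number of white nodes in a duplicative tree. -/
  def whitesT : DTree → ℕ
    | DTree.W g => 1 + whitesF g
    | DTree.B g => whitesF g
  /-- Number of white nodes in a duplicative forest. -/
  def whitesF : List DTree → ℕ
    | [] => 0
    | t :: f => whitesT t + whitesF f
end

/-- Closed terms: no variables. -/
def MClosed : MTerm → Prop
  | MTerm.M => True
  | MTerm.var _ => False
  | MTerm.app a b => MClosed a ∧ MClosed b

/-- Degree: number of applications. -/
def deg : MTerm → ℕ
  | MTerm.M => 0
  | MTerm.var _ => 0
  | MTerm.app a b => deg a + deg b + 1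

/-- Subterm relation. -/
inductive Subterm : MTerm → MTerm → Prop
  | refl (t : MTerm) : Subterm t t
  | left {s a : MTerm} (b : MTerm) : Subterm s a → Subterm s (MTerm.app a b)
  | right (a : MTerm) {s b : MTerm} : Subterm s b → Subterm s (MTerm.app a b)

/-- The term `r_d`. -/
def rTerm : ℕ → MTerm
  | 0 => MTerm.M
  | d + 1 => MTerm.app MTerm.M (rTerm d)

/-- Saturated chain from `a` to `b`, given as the list of its elements. -/
def SatChain (a b : MTerm) (c : List MTerm) : Prop :=
  List.Chain' MCovBy c ∧ c.head? = some a ∧ c.getLast? = some b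

/-! The map `fr` commutes with rewriting: a reduction `M ⋆ t ⇒ t ⋆ t` with `t ≠ M` is exactly a step
`W(fr t) ⋖ B(fr t · fr t)`, and congruence steps become steps inside a black or white node.
Conversely every `⋖`-step out of `fr s` is the image of a `⇒`-step out of `s`, so `D*(fr s)`
is the image of the upset of `s`.
Injectivity of `fr` on the upset of `t` holds because reduction never turns a leaf into an
application or back, so the boundary between `fr a` and `fr b` in `B(fr a · fr b)` is fixed by `t`.
Surjectivity, lifting and injectivity together show that `fr` also reflects the order. -/

open MTerm DTree

namespace Step

variable {s s' : MTerm}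

lemma src_ne_M (h : Step s s') : s ≠ M := by
  rintro rfl; cases h

lemma tgt_ne_M (h : Step s s') : s' ≠ M := by
  cases h <;> nofun

end Step

lemma fr_app_M {b : MTerm} (hb : b ≠ M) : fr (app M b) = [W (fr b)] := by
  cases b
  · contradiction
  all_goals rfl

lemma fr_app {a b : MTerm} (h : a ≠ M ∨ b = M) : fr (app a b) = [B (fr a ++ fr b)] := by
  rcases h with ha | rfl
  · cases a
    · contradiction
    all_goals rfl
  · cases a <;> rfl

lemma length_fr_app (a b : MTerm) : (fr (app a b)).length = 1 := by
  cases a <;> cases b <;> rfl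

lemma fr_app_inj {a₁ a₂ b₁ b₂ : MTerm} (ha₁ : a₁ ≠ M) (ha₂ : a₂ ≠ M)
    (hlen : (fr a₁).length = (fr a₂).length) (h : fr (app a₁ b₁) = fr (app a₂ b₂)) :
    fr a₁ = fr a₂ ∧ fr b₁ = fr b₂ := by
  rw [fr_app (.inl ha₁), fr_app (.inl ha₂)] at h
  exact List.append_inj (by simpa using h) hlen

namespace MLe

variable {a b s : MTerm}

lemma eq_M (h : MLe M s) : s = M := by
  induction h with
  | refl => rfl
  | tail _ h ih => subst ih; cases h

lemma eq_var {i : ℕ} (h : MLe (var i) s) : s = var i := by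
  induction h with
  | refl => rfl
  | tail _ h ih => subst ih; cases h

lemma ne_M (h : MLe a s) (ha : a ≠ M) : s ≠ M := by
  cases h with
  | refl => exact ha
  | tail _ h => exact h.tgt_ne_M

lemma length_fr (h : MLe a s) : (fr s).length = (fr a).length := by
  induction h with
  | refl => rfl
  | tail _ h ih =>
    cases h <;> simpa only [length_fr_app] using ih

lemma app_inv (ha : a ≠ M) (h : MLe (app a b) s) :
    ∃ a' b', s = app a' b' ∧ MLe a a' ∧ MLe b b' := by
  induction h with
  | refl => exact ⟨a, b, rfl, .refl, .refl⟩
  | tail _ h ih =>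
    obtain ⟨a', b', rfl, ha', hb'⟩ := ih
    cases h with
    | mock => exact absurd rfl (ha'.ne_M ha)
    | left _ h => exact ⟨_, _, rfl, ha'.tail h, hb'⟩
    | right _ h => exact ⟨_, _, rfl, ha', hb'.tail h⟩

lemma app_M_inv (h : MLe (app M b) s) :
    (∃ b', s = app M b' ∧ MLe b b') ∨ ∃ u v, s = app u v ∧ MLe b u ∧ MLe b v := by
  induction h with
  | refl => exact .inl ⟨b, rfl, .refl⟩
  | tail _ h ih =>
    rcases ih with ⟨b', rfl, hb'⟩ | ⟨u, v, rfl, hu, hv⟩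
    · cases h with
      | mock => exact .inr ⟨b', b', rfl, hb', hb'⟩
      | left _ h => cases h
      | right _ h => exact .inl ⟨_, rfl, hb'.tail h⟩
    · cases h with
      | mock => exact .inr ⟨v, v, rfl, hv, hv⟩
      | left _ h => exact .inr ⟨_, _, rfl, hu.tail h, hv⟩
      | right _ h => exact .inr ⟨_, _, rfl, hu, hv.tail h⟩

end MLe

theorem fr_injOn_upset (t : MTerm) : Set.InjOn fr {s | MLe t s} := by
  induction t with
  | M => intro s₁ h₁ s₂ h₂ _; rw [MLe.eq_M h₁, MLe.eq_M h₂]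
  | var i => intro s₁ h₁ s₂ h₂ _; rw [MLe.eq_var h₁, MLe.eq_var h₂]
  | app a b iha ihb =>
    intro s₁ h₁ s₂ h₂ hfr
    simp only [Set.mem_ofPred_eq] at h₁ h₂
    by_cases ha : a = M
    · subst ha
      obtain rfl | hb := eq_or_ne b M
      · have hMM : ∀ s, MLe (app M M) s → s = app M M := fun s hs => by
          rcases hs.app_M_inv with ⟨b', rfl, hb'⟩ | ⟨u, v, rfl, hu, hv⟩
          · rw [hb'.eq_M]
          · rw [hu.eq_M, hv.eq_M]
        rw [hMM s₁ h₁, hMM s₂ h₂]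
      rcases h₁.app_M_inv with ⟨b₁, rfl, hb₁⟩ | ⟨u₁, v₁, rfl, hu₁, hv₁⟩ <;>
        rcases h₂.app_M_inv with ⟨b₂, rfl, hb₂⟩ | ⟨u₂, v₂, rfl, hu₂, hv₂⟩
      · rw [fr_app_M (hb₁.ne_M hb), fr_app_M (hb₂.ne_M hb)] at hfr
        simp only [List.cons.injEq, W.injEq, and_true] at hfr
        rw [ihb hb₁ hb₂ hfr]
      · rw [fr_app_M (hb₁.ne_M hb), fr_app (.inl (hu₂.ne_M hb))] at hfr
        simp at hfr
      · rw [fr_app (.inl (hu₁.ne_M hb)), fr_app_M (hb₂.ne_M hb)] at hfr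
        simp at hfr
      · obtain ⟨hu, hv⟩ := fr_app_inj (hu₁.ne_M hb) (hu₂.ne_M hb)
          (hu₁.length_fr.trans hu₂.length_fr.symm) hfr
        rw [ihb hu₁ hu₂ hu, ihb hv₁ hv₂ hv]
    · obtain ⟨a₁, b₁, rfl, ha₁, hb₁⟩ := h₁.app_inv ha
      obtain ⟨a₂, b₂, rfl, ha₂, hb₂⟩ := h₂.app_inv ha
      obtain ⟨hfa, hfb⟩ := fr_app_inj (ha₁.ne_M ha) (ha₂.ne_M ha)
        (ha₁.length_fr.trans ha₂.length_fr.symm) hfr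
      rw [iha ha₁ ha₂ hfa, ihb hb₁ hb₂ hfb]

namespace DStep

lemma append_right {g g' : List DTree} (h : DStep g g') (f : List DTree) :
    DStep (g ++ f) (g' ++ f) := by
  induction h with
  | dup g => exact head f (dup g)
  | white h => exact head f (white h)
  | black h => exact head f (black h)
  | head f₀ h => exact head (f₀ ++ f) h
  | tail t _ ih => exact tail t ih

lemma append_left (f : List DTree) {g g' : List DTree} (h : DStep g g') :
    DStep (f ++ g) (f ++ g') := by
  induction f with
  | nil => exact h
  | cons t f ih => exact tail t ih

lemma singleton_inv {x : DTree} {f : List DTree} (h : DStep [x] f) :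
    (∃ g, x = W g ∧ f = [B (g ++ g)]) ∨
    (∃ g g', DStep g g' ∧ x = W g ∧ f = [W g']) ∨
    (∃ g g', DStep g g' ∧ x = B g ∧ f = [B g']) := by
  generalize hx : [x] = f₀ at h
  induction h with
  | dup g => cases hx; exact .inl ⟨g, rfl, rfl⟩
  | white h => cases hx; exact .inr (.inl ⟨_, _, h, rfl, rfl⟩)
  | black h => cases hx; exact .inr (.inr ⟨_, _, h, rfl, rfl⟩)
  | head f₀ _ ih => cases hx; exact ih rfl
  | tail t h => cases hx; cases h

lemma cons_inv {x : DTree} {f h : List DTree} (hs : DStep (x :: f) h) :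
    (∃ x', DStep [x] [x'] ∧ h = x' :: f) ∨ ∃ f', DStep f f' ∧ h = x :: f' := by
  cases hs with
  | dup g => exact .inl ⟨_, dup g, rfl⟩
  | white h => exact .inl ⟨_, white h, rfl⟩
  | black h => exact .inl ⟨_, black h, rfl⟩
  | head _ h => exact .inl ⟨_, h, rfl⟩
  | tail _ h => exact .inr ⟨_, h, rfl⟩

lemma append_inv {f g h : List DTree} (hs : DStep (f ++ g) h) :
    (∃ f', DStep f f' ∧ h = f' ++ g) ∨ ∃ g', DStep g g' ∧ h = f ++ g' := by
  induction f generalizing h with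
  | nil => exact .inr ⟨h, hs, rfl⟩
  | cons x f ih =>
    rcases cons_inv hs with ⟨x', hx, rfl⟩ | ⟨k, hk, rfl⟩
    · exact .inl ⟨x' :: f, head f hx, rfl⟩
    · rcases ih hk with ⟨f', hf, rfl⟩ | ⟨g', hg, rfl⟩
      · exact .inl ⟨x :: f', tail x hf, rfl⟩
      · exact .inr ⟨g', hg, rfl⟩

end DStep

lemma Step.dstep_fr {s s' : MTerm} (h : Step s s') (hne : s ≠ s') : DStep (fr s) (fr s') := by
  induction h with
  | mock t =>
    have ht : t ≠ M := by rintro rfl; exact hne rfl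
    rw [fr_app_M ht, fr_app (.inl ht)]
    exact .dup (fr t)
  | left t₂ h ih =>
    rw [fr_app (.inl h.src_ne_M), fr_app (.inl h.tgt_ne_M)]
    exact .black ((ih fun he => hne (he ▸ rfl)).append_right _)
  | right t₁ h ih =>
    have ih := ih fun he => hne (he ▸ rfl)
    by_cases h₁ : t₁ = M
    · subst h₁
      rw [fr_app_M h.src_ne_M, fr_app_M h.tgt_ne_M]
      exact .white ih
    · rw [fr_app (.inl h₁), fr_app (.inl h₁)]
      exact .black (ih.append_left _)

lemma MLe.dle_fr {s s' : MTerm} (h : MLe s s') : DLe (fr s) (fr s') := by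
  induction h with
  | refl => exact .refl
  | @tail b c _ h ih =>
    by_cases he : b = c
    · exact he ▸ ih
    · exact ih.tail (h.dstep_fr he)

lemma exists_step_fr_eq_of_dstep (s : MTerm) {f : List DTree} (h : DStep (fr s) f) :
    ∃ s', Step s s' ∧ fr s' = f := by
  induction s generalizing f with
  | M => cases h
  | var => cases h
  | app a b iha ihb =>
    by_cases hW : a = M ∧ b ≠ M
    · obtain ⟨rfl, hb⟩ := hW
      rw [fr_app_M hb] at h
      rcases h.singleton_inv with ⟨_, ⟨⟩, rfl⟩ | ⟨_, g', hg, ⟨⟩, rfl⟩ | ⟨_, _, _, ⟨⟩, _⟩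
      · exact ⟨app b b, .mock b, fr_app (.inl hb)⟩
      · obtain ⟨b', hbb, rfl⟩ := ihb hg
        exact ⟨app M b', .right M hbb, fr_app_M hbb.tgt_ne_M⟩
    · have hB : a ≠ M ∨ b = M := by tauto
      rw [fr_app hB] at h
      rcases h.singleton_inv with ⟨_, ⟨⟩, _⟩ | ⟨_, _, _, ⟨⟩, _⟩ | ⟨_, g', hg, ⟨⟩, rfl⟩
      rcases hg.append_inv with ⟨fa, hfa, rfl⟩ | ⟨fb, hfb, rfl⟩
      · obtain ⟨a', haa, rfl⟩ := iha hfa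
        exact ⟨app a' b, .left b haa, fr_app (.inl haa.tgt_ne_M)⟩
      · obtain ⟨b', hbb, rfl⟩ := ihb hfb
        exact ⟨app a b', .right a hbb, fr_app (.inl (hB.resolve_right hbb.src_ne_M))⟩

lemma exists_mle_fr_eq_of_dle {s : MTerm} {f : List DTree} (h : DLe (fr s) f) :
    ∃ s', MLe s s' ∧ fr s' = f := by
  induction h with
  | refl => exact ⟨s, .refl, rfl⟩
  | tail _ h ih =>
    obtain ⟨s', hss', rfl⟩ := ih
    obtain ⟨s'', hs's'', rfl⟩ := exists_step_fr_eq_of_dstep s' h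
    exact ⟨s'', hss'.tail hs's'', rfl⟩

/-- the map `fr` restricts to an order isomorphism from `{s : t ≼ s}`
(ordered by `≼`) onto `D*(fr t)` (ordered by `≪`). -/
theorem fr_restricts_to_order_iso (t : MTerm) :
    (∀ s, MLe t s → DLe (fr t) (fr s)) ∧
    (∀ s s', MLe t s → MLe t s' → fr s = fr s' → s = s') ∧
    (∀ f', DLe (fr t) f' → ∃ s, MLe t s ∧ fr s = f') ∧
    (∀ s s', MLe t s → MLe t s' → (MLe s s' ↔ DLe (fr s) (fr s'))) := by
  refine ⟨fun s => MLe.dle_fr, fun s s' hs hs' => fr_injOn_upset t hs hs',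
    fun f' => exists_mle_fr_eq_of_dle, fun s s' hs hs' => ⟨MLe.dle_fr, fun h => ?_⟩⟩
  obtain ⟨s'', hss'', hfr⟩ := exists_mle_fr_eq_of_dle h
  rwa [← fr_injOn_upset t (hs.trans hss'') hs' hfr]
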